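/- arXiv:1103.0545 — 6 statements merged into one kernel-verified Lean document; each statement's English description precedes it below -/
import Mathlib

section
/- The Gossez operator G is anti-symmetric: for all x, y ∈ ℓ¹, ⟨Gx, y⟩ = −⟨Gy, x⟩, where ⟨z, w⟩ = Σ_n z_n w_n for z ∈ ℓ^∞ and w ∈ ℓ¹. In particular ⟨Gx, x⟩ = 0 for all x ∈ ℓ¹. -/
open Finset

/-- Gossez's operator: `(G x) n = (sum over k > n of x k) - (sum over k < n of x k)`. -/
noncomputable def gossez (x : ℕ → ℝ) (n : ℕ) : ℝ :=
  (∑' k : ℕ, x (n + 1 + k)) - ∑ k ∈ Finset.range n, x k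

/-! With `T(x, y) = ∑_{k < n} x k * y n`, absolutely convergent for `x, y ∈ ℓ¹`, Fubini turns
`⟨G x, y⟩ = ∑_n ∑_{k > n} x k * y n - ∑_n ∑_{k < n} x k * y n` into `T(y, x) - T(x, y)`,
which is visibly antisymmetric. -/

namespace Gossez

variable {x y : ℕ → ℝ}

noncomputable def ltProd (x y : ℕ → ℝ) (p : ℕ × ℕ) : ℝ :=
  if p.1 < p.2 then x p.1 * y p.2 else 0

lemma summable_ltProd (hx : Summable fun n => |x n|) (hy : Summable fun n => |y n|) :
    Summable (ltProd x y) := by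
  refine (hx.mul_of_nonneg hy (fun _ => abs_nonneg _) (fun _ => abs_nonneg _)).of_norm_bounded
    fun p => ?_
  unfold ltProd
  split_ifs
  · rw [Real.norm_eq_abs, abs_mul]
  · simp only [norm_zero]; positivity

lemma tsum_ltProd_fst (n : ℕ) : ∑' k, ltProd x y (k, n) = (∑ k ∈ range n, x k) * y n := by
  have hvanish : ∀ k ∉ range n, ltProd x y (k, n) = 0 := fun k hk =>
    if_neg (by simpa using hk)
  rw [tsum_eq_sum hvanish, sum_mul]
  exact sum_congr rfl fun k hk => if_pos (mem_range.1 hk)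

lemma tsum_ltProd_snd (hy : Summable y) (k : ℕ) :
    ∑' n, ltProd x y (k, n) = x k * ∑' j, y (k + 1 + j) := by
  have hshift (j : ℕ) : ltProd x y (k, j + (k + 1)) = x k * y (k + 1 + j) := by
    rw [ltProd, if_pos (by omega), add_comm j]
  have hhead : ∀ n ∈ range (k + 1), ltProd x y (k, n) = 0 := fun n hn =>
    if_neg (by simp only [mem_range] at hn; omega)
  have hsummable : Summable fun j => ltProd x y (k, j + (k + 1)) := by
    simp only [hshift]
    exact (hy.comp_injective (add_right_injective (k + 1))).mul_left (x k)
  rw [← Summable.sum_add_tsum_nat_add' (f := fun n => ltProd x y (k, n)) hsummable,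
    sum_eq_zero hhead, zero_add, ← tsum_mul_left]
  exact tsum_congr hshift

lemma summable_partialSum_mul (hx : Summable fun n => |x n|) (hy : Summable fun n => |y n|) :
    Summable fun n => (∑ k ∈ range n, x k) * y n := by
  simpa only [Prod.swap_prod_mk, tsum_ltProd_fst] using (summable_ltProd hx hy).prod_symm.prod

lemma summable_mul_tailSum (hx : Summable fun n => |x n|) (hy : Summable fun n => |y n|) :
    Summable fun k => x k * ∑' j, y (k + 1 + j) := by
  simpa only [tsum_ltProd_snd hy.of_abs] using (summable_ltProd hx hy).prod

lemma tsum_partialSum_mul (hx : Summable fun n => |x n|) (hy : Summable fun n => |y n|) :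
    ∑' n, (∑ k ∈ range n, x k) * y n = ∑' k, x k * ∑' j, y (k + 1 + j) := by
  calc ∑' n, (∑ k ∈ range n, x k) * y n = ∑' n, ∑' k, ltProd x y (k, n) := by
        simp only [tsum_ltProd_fst]
    _ = ∑' k, ∑' n, ltProd x y (k, n) :=
        Summable.tsum_comm (f := fun k n => ltProd x y (k, n)) (summable_ltProd hx hy)
    _ = ∑' k, x k * ∑' j, y (k + 1 + j) := by simp only [tsum_ltProd_snd hy.of_abs]

lemma tsum_gossez_mul (hx : Summable fun n => |x n|) (hy : Summable fun n => |y n|) :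
    ∑' n, gossez x n * y n =
      (∑' n, y n * ∑' k, x (n + 1 + k)) - ∑' n, x n * ∑' k, y (n + 1 + k) := by
  rw [← tsum_partialSum_mul hx hy,
    ← Summable.tsum_sub (summable_mul_tailSum hy hx) (summable_partialSum_mul hx hy)]
  exact tsum_congr fun n => by rw [gossez]; ring

end Gossez

theorem gossez_antisymmetric (x y : ℕ → ℝ) (hx : Summable fun n => |x n|)
    (hy : Summable fun n => |y n|) :
    (∑' n : ℕ, gossez x n * y n) = -(∑' n : ℕ, gossez y n * x n) ∧
    (∑' n : ℕ, gossez x n * x n) = 0 := by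
  refine ⟨?_, ?_⟩
  · rw [Gossez.tsum_gossez_mul hx hy, Gossez.tsum_gossez_mul hy hx]
    ring
  · rw [Gossez.tsum_gossez_mul hx hx, sub_self]
end

section
/- For every x ∈ ℓ¹, the sequence G(x) + ⟨x, e⟩·e converges to 0, i.e., lies in c₀ (the space ℓ^∞₀ of bounded sequences tending to 0). -/
theorem gossez_add_tsum_eq {x : ℕ → ℝ} (hx : Summable x) (n : ℕ) :
    gossez x n + ∑' k, x k = ∑' k, x (k + (n + 1)) + ∑' k, x (k + n) := by
  rw [gossez, ← hx.sum_add_tsum_nat_add n]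
  simp_rw [add_comm (n + 1)]
  ring

theorem gossez_shift_mem_c0 (x : ℕ → ℝ) (hx : Summable fun n => |x n|) :
    Filter.Tendsto (fun n => gossez x n + (∑' k : ℕ, x k)) Filter.atTop (nhds 0) := by
  have htail := tendsto_sum_nat_add x
  simpa only [gossez_add_tsum_eq hx.of_abs, Function.comp_def, add_zero] using
    (htail.comp (Filter.tendsto_add_atTop_nat 1)).add htail
end

section
/- For the operator A(x) = G(x) + ⟨x, e⟩·e on ℓ¹, one has ⟨A(x), x⟩ = ⟨x, e⟩² for every x ∈ ℓ¹; in particular A is a monotone linear operator (⟨A(x), x⟩ ≥ 0). -/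
/-- The operator `A x = G x + ⟨x, e⟩ • e`. -/
noncomputable def opA (x : ℕ → ℝ) (n : ℕ) : ℝ := gossez x n + ∑' k : ℕ, x k

open Finset

theorem norm_sum_range_le_tsum_norm {E : Type*} [SeminormedAddCommGroup E] {x : ℕ → E}
    (hx : Summable fun n => ‖x n‖) (n : ℕ) : ‖∑ k ∈ range n, x k‖ ≤ ∑' k, ‖x k‖ :=
  (norm_sum_le _ _).trans (hx.sum_le_tsum _ fun _ _ => norm_nonneg _)

theorem hasSum_sq_sum_range_succ_sub_sq {R : Type*} [NormedCommRing R] [CompleteSpace R]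
    {x : ℕ → R} (hx : Summable fun n => ‖x n‖) :
    HasSum (fun n => (∑ k ∈ range (n + 1), x k) ^ 2 - (∑ k ∈ range n, x k) ^ 2)
      ((∑' k, x k) ^ 2) := by
  set s : ℕ → R := fun n => ∑ k ∈ range n, x k
  set T := ∑' k, ‖x k‖
  have hs : ∀ n, ‖s n‖ ≤ T := norm_sum_range_le_tsum_norm hx
  have hterm : ∀ n, s (n + 1) ^ 2 - s n ^ 2 = (s (n + 1) + s n) * x n := by
    intro n
    simp only [s, sum_range_succ]
    ring
  have hsummable : Summable fun n => s (n + 1) ^ 2 - s n ^ 2 := by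
    refine Summable.of_norm_bounded (hx.mul_left (2 * T)) fun n => ?_
    calc ‖s (n + 1) ^ 2 - s n ^ 2‖
        ≤ ‖s (n + 1) + s n‖ * ‖x n‖ := hterm n ▸ norm_mul_le _ _
      _ ≤ (‖s (n + 1)‖ + ‖s n‖) * ‖x n‖ := by gcongr; exact norm_add_le _ _
      _ ≤ 2 * T * ‖x n‖ := by gcongr; linarith [hs (n + 1), hs n]
  rw [hsummable.hasSum_iff_tendsto_nat, funext (sum_range_sub fun n => s n ^ 2)]
  simpa [s] using hx.of_norm.tendsto_sum_tsum_nat.pow 2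

theorem gossez_eq_tsum_sub_sum_range {x : ℕ → ℝ} (hx : Summable x) (n : ℕ) :
    gossez x n = ∑' k, x k - ∑ k ∈ range (n + 1), x k - ∑ k ∈ range n, x k := by
  rw [gossez, ← hx.sum_add_tsum_nat_add (n + 1)]
  simp only [add_comm (n + 1)]
  ring

theorem opA_mul_self_eq {x : ℕ → ℝ} (hx : Summable x) (n : ℕ) :
    opA x n * x n = 2 * (∑' k, x k) * x n
      - ((∑ k ∈ range (n + 1), x k) ^ 2 - (∑ k ∈ range n, x k) ^ 2) := by
  rw [opA, gossez_eq_tsum_sub_sum_range hx, sum_range_succ]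
  ring

theorem hasSum_opA_mul_self {x : ℕ → ℝ} (hx : Summable fun n => |x n|) :
    HasSum (fun n => opA x n * x n) ((∑' k, x k) ^ 2) := by
  rw [funext (opA_mul_self_eq hx.of_abs),
    show (∑' k, x k) ^ 2 = 2 * (∑' k, x k) * (∑' k, x k) - (∑' k, x k) ^ 2 by ring]
  exact (hx.of_abs.hasSum.mul_left _).sub (hasSum_sq_sum_range_succ_sub_sq hx)

theorem opA_monotone (x : ℕ → ℝ) (hx : Summable fun n => |x n|) :
    (∑' n : ℕ, opA x n * x n) = (∑' k : ℕ, x k) ^ 2 ∧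
    0 ≤ ∑' n : ℕ, opA x n * x n := by
  have h := (hasSum_opA_mul_self hx).tsum_eq
  exact ⟨h, h ▸ sq_nonneg _⟩
end

section
/- If x ∈ ℓ¹ satisfies G(x) = 0 and Σ_k x_k = 0, then x = 0. Consequently the operator A(x) = G(x) + ⟨x,e⟩·e is injective on ℓ¹. -/
lemma eq_zero_of_summable_of_succ_eq_neg {E : Type*} [NormedAddCommGroup E] {x : ℕ → E}
    (hx : Summable x) (h : ∀ n, x (n + 1) = -x n) : x = 0 := by
  have hnorm : ∀ n, ‖x n‖ = ‖x 0‖ := by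
    intro n
    induction n with
    | zero => rfl
    | succ n ih => rw [h n, norm_neg, ih]
  have hlim : Filter.Tendsto (fun n => ‖x n‖) Filter.atTop (nhds 0) :=
    tendsto_zero_iff_norm_tendsto_zero.1 hx.tendsto_atTop_zero
  have h0 : ‖x 0‖ = 0 :=
    tendsto_nhds_unique tendsto_const_nhds (by simpa only [hnorm] using hlim)
  funext n
  rw [Pi.zero_apply, ← norm_eq_zero, hnorm n, h0]

lemma gossez_sub_gossez_succ {x : ℕ → ℝ} (hx : Summable x) (n : ℕ) :
    gossez x n - gossez x (n + 1) = x n + x (n + 1) := by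
  have htail : ∑' k : ℕ, x (n + 1 + k) = x (n + 1) + ∑' k : ℕ, x (n + 1 + 1 + k) := by
    have hs : Summable fun k => x (n + 1 + k) := hx.comp_injective (add_right_injective _)
    rw [hs.tsum_eq_zero_add]
    simp only [add_zero, add_assoc, add_comm 1]
  rw [gossez, gossez, Finset.sum_range_succ, htail]
  ring

lemma gossez_sub {x y : ℕ → ℝ} (hx : Summable x) (hy : Summable y) (n : ℕ) :
    gossez (x - y) n = gossez x n - gossez y n := by
  have hshift : ∀ z : ℕ → ℝ, Summable z → Summable fun k => z (n + 1 + k) :=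
    fun z hz => hz.comp_injective (add_right_injective (n + 1))
  simp only [gossez, Pi.sub_apply, (hshift x hx).tsum_sub (hshift y hy), Finset.sum_sub_distrib]
  ring

lemma eq_zero_of_gossez_eq_const {x : ℕ → ℝ} (hx : Summable x) {c : ℝ}
    (h : ∀ n, gossez x n = c) : x = 0 :=
  eq_zero_of_summable_of_succ_eq_neg hx fun n => by
    linarith [gossez_sub_gossez_succ hx n, h n, h (n + 1)]

theorem opA_injective :
    (∀ x : ℕ → ℝ, (Summable fun n => |x n|) →
      (∀ n, gossez x n = 0) → (∑' k : ℕ, x k) = 0 → ∀ n, x n = 0) ∧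
    (∀ x y : ℕ → ℝ, (Summable fun n => |x n|) → (Summable fun n => |y n|) →
      (∀ n, opA x n = opA y n) → x = y) := by
  refine ⟨fun x hx hG _ => congrFun (eq_zero_of_gossez_eq_const (summable_abs_iff.1 hx) hG),
    fun x y hx hy hA => ?_⟩
  have hx' : Summable x := summable_abs_iff.1 hx
  have hy' : Summable y := summable_abs_iff.1 hy
  have hconst : ∀ n, gossez (x - y) n = (∑' k, y k) - ∑' k, x k := fun n => by
    rw [gossez_sub hx' hy']
    linarith [hA n, show opA x n = gossez x n + ∑' k, x k from rfl,
      show opA y n = gossez y n + ∑' k, y k from rfl]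
  exact sub_eq_zero.1 (eq_zero_of_gossez_eq_const (hx'.sub hy') hconst)
end

section
/- Let X be a real Banach space, A : X* → X a linear, monotone, injective, everywhere-defined operator, and suppose there exists x₀** ∈ X** \ X with β := sup_{x* ∈ X*}( ⟨x*, x₀**⟩ − ⟨A(x*), x*⟩ ) < ∞. Then there exists x₀*** ∈ X*** vanishing on X with ⟨x₀**, x₀***⟩ > β, and consequently sup_{x* ∈ X*}( ⟨x*, x₀**⟩ + ⟨A(x*), x₀***⟩ − ⟨A(x*), x*⟩ ) = β < ⟨x₀**, x₀***⟩. -/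
/-!
Since `X` is complete, its canonical image in `X**` is a closed subspace, so Hahn–Banach (applied
in the quotient `X** ⧸ X`) yields `φ ∈ X***` vanishing on `X` with `φ x₀ = 1`. Rescaling `φ` by
`β + 1` makes `φ x₀ > β`, while the extra term `φ (A f)` in the supremum vanishes because `A f ∈ X`.
-/

open NormedSpace

theorem Submodule.exists_dual_eq_zero_and_apply_eq_one {𝕜 E : Type*} [RCLike 𝕜]
    [NormedAddCommGroup E] [NormedSpace 𝕜 E] {p : Submodule 𝕜 E} (hp : IsClosed (p : Set E))
    {x : E} (hx : x ∉ p) :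
    ∃ f : StrongDual 𝕜 E, (∀ y ∈ p, f y = 0) ∧ f x = 1 := by
  obtain ⟨g, hg⟩ := SeparatingDual.exists_eq_one (R := 𝕜) (V := E ⧸ p)
    ((Submodule.Quotient.mk_eq_zero p).not.mpr hx)
  exact ⟨g.comp p.mkQL, fun y hy => by simp [(Submodule.Quotient.mk_eq_zero p).mpr hy], hg⟩

theorem isClosed_range_inclusionInDoubleDual (𝕜 E : Type*) [RCLike 𝕜]
    [NormedAddCommGroup E] [NormedSpace 𝕜 E] [CompleteSpace E] :
    IsClosed (Set.range (inclusionInDoubleDual 𝕜 E)) :=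
  ((inclusionInDoubleDualLi 𝕜 (E := E)).isometry.isClosedEmbedding
    (γ := StrongDual 𝕜 (StrongDual 𝕜 E))).isClosed_range

theorem exists_dual_doubleDual_eq_zero_on_range_apply_eq_one {𝕜 E : Type*} [RCLike 𝕜]
    [NormedAddCommGroup E] [NormedSpace 𝕜 E] [CompleteSpace E]
    {x : StrongDual 𝕜 (StrongDual 𝕜 E)} (hx : x ∉ Set.range (inclusionInDoubleDual 𝕜 E)) :
    ∃ φ : StrongDual 𝕜 (StrongDual 𝕜 (StrongDual 𝕜 E)),
      (∀ y : E, φ (inclusionInDoubleDual 𝕜 E y) = 0) ∧ φ x = 1 := by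
  have hclosed : IsClosed (LinearMap.range (inclusionInDoubleDual 𝕜 E).toLinearMap :
      Set (StrongDual 𝕜 (StrongDual 𝕜 E))) :=
    isClosed_range_inclusionInDoubleDual 𝕜 E
  obtain ⟨φ, hφ_range, hφx⟩ :=
    Submodule.exists_dual_eq_zero_and_apply_eq_one (𝕜 := 𝕜) hclosed (x := x) hx
  exact ⟨φ, fun y => hφ_range _ ⟨y, rfl⟩, hφx⟩

theorem key_inequality_for_inverse_not_typeD_general
    (X : Type*) [NormedAddCommGroup X] [NormedSpace ℝ X] [CompleteSpace X]
    (A : StrongDual ℝ X →ₗ[ℝ] X)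
    (x₀ : StrongDual ℝ (StrongDual ℝ X))
    (hx₀ : x₀ ∉ Set.range (inclusionInDoubleDual ℝ X))
    (β : ℝ)
    (hβ : IsLUB {r : ℝ | ∃ f : StrongDual ℝ X, r = x₀ f - f (A f)} β) :
    ∃ φ : StrongDual ℝ (StrongDual ℝ (StrongDual ℝ X)),
      (∀ x : X, φ (inclusionInDoubleDual ℝ X x) = 0) ∧
      φ x₀ > β ∧
      IsLUB {r : ℝ | ∃ f : StrongDual ℝ X,
        r = x₀ f + φ (inclusionInDoubleDual ℝ X (A f)) - f (A f)} β ∧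
      β < φ x₀ := by
  obtain ⟨φ, hφX, hφx₀⟩ := exists_dual_doubleDual_eq_zero_on_range_apply_eq_one hx₀
  have hx₀_value : ((β + 1) • φ) x₀ = β + 1 := by simp [hφx₀]
  have hsup_unchanged : {r : ℝ | ∃ f : StrongDual ℝ X,
      r = x₀ f + ((β + 1) • φ) (inclusionInDoubleDual ℝ X (A f)) - f (A f)} =
      {r : ℝ | ∃ f : StrongDual ℝ X, r = x₀ f - f (A f)} := by
    simp [hφX]
  refine ⟨(β + 1) • φ, fun x => by simp [hφX], ?_, hsup_unchanged ▸ hβ, ?_⟩ <;> linarith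

theorem key_inequality_for_inverse_not_typeD
    (X : Type*) [NormedAddCommGroup X] [NormedSpace ℝ X] [CompleteSpace X]
    (A : StrongDual ℝ X →ₗ[ℝ] X)
    (hmono : ∀ f : StrongDual ℝ X, 0 ≤ f (A f))
    (hinj : Function.Injective A)
    (x₀ : StrongDual ℝ (StrongDual ℝ X))
    (hx₀ : x₀ ∉ Set.range (inclusionInDoubleDual ℝ X))
    (β : ℝ)
    (hβ : IsLUB {r : ℝ | ∃ f : StrongDual ℝ X, r = x₀ f - f (A f)} β) :
    ∃ φ : StrongDual ℝ (StrongDual ℝ (StrongDual ℝ X)),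
      (∀ x : X, φ (inclusionInDoubleDual ℝ X x) = 0) ∧
      φ x₀ > β ∧
      IsLUB {r : ℝ | ∃ f : StrongDual ℝ X,
        r = x₀ f + φ (inclusionInDoubleDual ℝ X (A f)) - f (A f)} β ∧
      β < φ x₀ :=
  key_inequality_for_inverse_not_typeD_general X A x₀ hx₀ β hβ
end

section
/- Let T : X ⇉ X* be maximal monotone. Then the Gossez closure 𝑇̃ : X** ⇉ X*, with graph {(x**, x*) : ⟨x* − y*, x** − y⟩ ≥ 0 for all (y, y*) ∈ graph T}, is a monotone extension of T (viewing X ⊆ X**) whenever T is of type (D); in particular graph(T) ⊆ graph(𝑇̃). -/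
open NormedSpace

variable (X : Type*) [NormedAddCommGroup X] [NormedSpace ℝ X]

/-- A set-valued operator `T : X ⇉ X*`, given by its graph, is monotone. -/
def IsMonotoneGraph (T : Set (X × StrongDual ℝ X)) : Prop :=
  ∀ p ∈ T, ∀ q ∈ T, 0 ≤ (p.2 - q.2) (p.1 - q.1)

/-- Maximal monotone: monotone and maximal among monotone graphs. -/
def IsMaximalMonotone (T : Set (X × StrongDual ℝ X)) : Prop :=
  IsMonotoneGraph X T ∧ ∀ S : Set (X × StrongDual ℝ X), IsMonotoneGraph X S → T ⊆ S → S = T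

/-- Gossez's monotone closure of `T`, as a subset of `X** × X*`:
`(x**, x*)` is in the closure iff `⟨x* - y*, x** - y⟩ ≥ 0` for all `(y, y*) ∈ T`. -/
def gossezClosure (T : Set (X × StrongDual ℝ X)) :
    Set (StrongDual ℝ (StrongDual ℝ X) × StrongDual ℝ X) :=
  {p | ∀ q ∈ T, 0 ≤ p.1 (p.2 - q.2) - (p.2 - q.2) q.1}

/-- Gossez type (D): every point of the Gossez closure is the limit of a bounded net
from the graph, in the σ(X**, X*) × strong topology. -/
def IsTypeD (T : Set (X × StrongDual ℝ X)) : Prop :=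
  ∀ p ∈ gossezClosure X T,
    ∃ (ι : Type) (l : Filter ι), l.NeBot ∧
      ∃ u : ι → X × StrongDual ℝ X,
        (∀ i, u i ∈ T) ∧
        (∃ C : ℝ, ∀ i, ‖(u i).1‖ + ‖(u i).2‖ ≤ C) ∧
        (∀ g : StrongDual ℝ X, Filter.Tendsto (fun i => g ((u i).1)) l (nhds (p.1 g))) ∧
        Filter.Tendsto (fun i => (u i).2) l (nhds p.2)

/-! The inclusion `T ⊆ T̃` is just the monotonicity of `T`. For monotonicity of `T̃`, take `p, q`
in it and use type (D) to approximate `p` by a bounded net `(xᵢ, xᵢ*)` in `T`, weak* in the first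
and strongly in the second component. Then `⟨xᵢ*, xᵢ⟩ → ⟨p*, p**⟩` because
`|⟨xᵢ* - p*, xᵢ⟩| ≤ ‖xᵢ* - p*‖ ‖xᵢ‖ → 0`, so the nonnegative numbers `⟨q* - xᵢ*, q** - xᵢ⟩`
tend to `⟨q* - p*, q** - p**⟩`, which is therefore nonnegative. -/

section

variable {X}

theorem mem_gossezClosure_of_isMonotoneGraph {T : Set (X × StrongDual ℝ X)}
    (hT : IsMonotoneGraph X T) {p : X × StrongDual ℝ X} (hp : p ∈ T) :
    (inclusionInDoubleDual ℝ X p.1, p.2) ∈ gossezClosure X T := fun q hq => by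
  simpa [map_sub] using hT p hp q hq

theorem tendsto_apply_apply_of_bounded {ι : Type*} {l : Filter ι} {x : ι → X}
    {f : ι → StrongDual ℝ X} {Φ : StrongDual ℝ (StrongDual ℝ X)} {φ : StrongDual ℝ X} {C : ℝ}
    (hx : ∀ i, ‖x i‖ ≤ C) (hf : Filter.Tendsto f l (nhds φ))
    (hxΦ : ∀ g : StrongDual ℝ X, Filter.Tendsto (fun i => g (x i)) l (nhds (Φ g))) :
    Filter.Tendsto (fun i => f i (x i)) l (nhds (Φ φ)) := by
  have hdiff : Filter.Tendsto (fun i => (f i - φ) (x i)) l (nhds 0) := by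
    have hnorm : Filter.Tendsto (fun i => ‖f i - φ‖ * C) l (nhds 0) := by
      simpa using (tendsto_iff_norm_sub_tendsto_zero.mp hf).mul_const C
    refine squeeze_zero_norm (fun i => ?_) hnorm
    exact ((f i - φ).le_opNorm (x i)).trans
      (mul_le_mul_of_nonneg_left (hx i) (norm_nonneg _))
  simpa using hdiff.add (hxΦ φ)

theorem tendsto_gossezPairing_of_bounded {ι : Type*} {l : Filter ι} {x : ι → X}
    {f : ι → StrongDual ℝ X} {C : ℝ} (p q : StrongDual ℝ (StrongDual ℝ X) × StrongDual ℝ X)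
    (hx : ∀ i, ‖x i‖ ≤ C) (hf : Filter.Tendsto f l (nhds p.2))
    (hxp : ∀ g : StrongDual ℝ X, Filter.Tendsto (fun i => g (x i)) l (nhds (p.1 g))) :
    Filter.Tendsto (fun i => q.1 (q.2 - f i) - (q.2 - f i) (x i)) l
      (nhds ((p.1 - q.1) (p.2 - q.2))) := by
  have hlim := ((tendsto_const_nhds (x := q.1 q.2)).sub
    ((q.1.continuous.tendsto p.2).comp hf)).sub
    ((hxp q.2).sub (tendsto_apply_apply_of_bounded hx hf hxp))
  convert hlim using 2 with i
  · simp only [map_sub, sub_apply, Function.comp_apply]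
  · simp only [map_sub, sub_apply]
    ring

theorem gossezClosure_monotone_of_isTypeD {T : Set (X × StrongDual ℝ X)} (hD : IsTypeD X T)
    {p q : StrongDual ℝ (StrongDual ℝ X) × StrongDual ℝ X}
    (hp : p ∈ gossezClosure X T) (hq : q ∈ gossezClosure X T) :
    0 ≤ (p.1 - q.1) (p.2 - q.2) := by
  obtain ⟨ι, l, hl, u, huT, ⟨C, hC⟩, hup, hus⟩ := hD p hp
  have hbound : ∀ i, ‖(u i).1‖ ≤ C := fun i =>
    (le_add_of_nonneg_right (norm_nonneg _)).trans (hC i)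
  exact ge_of_tendsto' (tendsto_gossezPairing_of_bounded p q hbound hus hup)
    fun i => hq (u i) (huT i)

end

theorem gossezClosure_monotone_extension
    (T : Set (X × StrongDual ℝ X)) (hT : IsMaximalMonotone X T) (hD : IsTypeD X T) :
    (∀ p ∈ gossezClosure X T, ∀ q ∈ gossezClosure X T,
        0 ≤ (p.1 - q.1) (p.2 - q.2)) ∧
    (∀ p ∈ T, (inclusionInDoubleDual ℝ X p.1, p.2) ∈ gossezClosure X T) :=
  ⟨fun _ hp _ hq => gossezClosure_monotone_of_isTypeD hD hp hq,
    fun _ hp => mem_gossezClosure_of_isMonotoneGraph hT.1 hp⟩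
end
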